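/- arXiv:2310.11203 — 4 statements merged into one kernel-verified Lean document; each statement's English description precedes it below -/
import Mathlib

section
/- Let x ∈ [0,1] and b ≥ 0. Then the set A = { y ∈ [x,1] : kl(x,y) ≤ b } is nonempty (it contains x), its supremum kl⁻¹(x,b) satisfies kl(x, kl⁻¹(x,b)) ≤ b (the supremum is attained), and for every y ∈ [x,1] with kl(x,y) ≤ b one has y ≤ kl⁻¹(x,b); in particular kl⁻¹(x,b) is the tightest upper bound on y derivable from the constraint kl(x,y) ≤ b together with y ≥ x. -/
open MeasureTheory ENNReal

/-- Binary Kullback–Leibler divergence `kl(q,p)` for `q, p ∈ [0,1]`, with the conventions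
`0 · ln 0 = 0` and `kl(q,p) = ∞` when `p ∈ {0,1}` and `q ≠ p`. -/
noncomputable def klBin (q p : ℝ) : ℝ≥0∞ :=
  if (p = 0 ∨ p = 1) ∧ q ≠ p then ∞
  else ENNReal.ofReal (q * Real.log (q / p) + (1 - q) * Real.log ((1 - q) / (1 - p)))

/-- Inverse binary KL divergence: `kl⁻¹(x,b) = sup { y ∈ [x,1] : kl(x,y) ≤ b }`. -/
noncomputable def klInv (x : ℝ) (b : ℝ≥0∞) : ℝ :=
  sSup {y : ℝ | x ≤ y ∧ y ≤ 1 ∧ klBin x y ≤ b}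

/-- Properties of the inverse binary KL: for `x ∈ [0,1]` and `b ≥ 0`, the set
`A = { y ∈ [x,1] : kl(x,y) ≤ b }` contains `x`, its supremum `kl⁻¹(x,b)` satisfies
`kl(x, kl⁻¹(x,b)) ≤ b` (the supremum is attained), and every `y ∈ [x,1]` with
`kl(x,y) ≤ b` satisfies `y ≤ kl⁻¹(x,b)`. -/
theorem klInv_spec (x : ℝ) (hx : x ∈ Set.Icc (0 : ℝ) 1) (b : ℝ) (hb : 0 ≤ b) :
    x ∈ {y : ℝ | x ≤ y ∧ y ≤ 1 ∧ klBin x y ≤ ENNReal.ofReal b} ∧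
    klBin x (klInv x (ENNReal.ofReal b)) ≤ ENNReal.ofReal b ∧
    ∀ y : ℝ, x ≤ y → y ≤ 1 → klBin x y ≤ ENNReal.ofReal b →
      y ≤ klInv x (ENNReal.ofReal b) := by
  obtain ⟨hx0, hx1⟩ := hx
  set f : ℝ → ℝ := fun y => x * Real.log (x / y) + (1 - x) * Real.log ((1 - x) / (1 - y))
    with hfdef
  have hxx : klBin x x = 0 := by
    rw [klBin, if_neg (by simp)]
    have h1 : Real.log (x / x) = 0 := by
      rcases eq_or_ne x 0 with h | h
      · simp [h]
      · simp [div_self h]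
    have h2 : Real.log ((1 - x) / (1 - x)) = 0 := by
      rcases eq_or_ne (1 - x) 0 with h | h
      · simp [h]
      · simp [div_self h]
    simp [h1, h2]
  have hmemx : x ∈ {y : ℝ | x ≤ y ∧ y ≤ 1 ∧ klBin x y ≤ ENNReal.ofReal b} :=
    ⟨le_refl x, hx1, by simp [hxx]⟩
  set A := {y : ℝ | x ≤ y ∧ y ≤ 1 ∧ klBin x y ≤ ENNReal.ofReal b} with hA
  have hne : A.Nonempty := ⟨x, hmemx⟩
  have hbdd : BddAbove A := ⟨1, fun y hy => hy.2.1⟩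
  have hklinv : klInv x (ENNReal.ofReal b) = sSup A := rfl
  set s := sSup A with hs
  have hxs : x ≤ s := le_csSup hbdd hmemx
  have hs1 : s ≤ 1 := csSup_le hne fun y hy => hy.2.1
  rw [hklinv]
  refine ⟨hmemx, ?_, fun y h1 h2 h3 => le_csSup hbdd ⟨h1, h2, h3⟩⟩
  rcases eq_or_lt_of_le hxs with hsx | hsx
  · rw [← hsx]
    simp [hxx]
  -- now x < s, hence x < 1 and 0 < s
  have hx1' : x < 1 := lt_of_lt_of_le hsx hs1
  have hs0 : 0 < s := lt_of_le_of_lt hx0 hsx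
  obtain ⟨u, hu_mono, hu_tend, hu_mem⟩ := exists_seq_tendsto_sSup hne hbdd
  have hun1 : ∀ n, u n < 1 := by
    intro n
    rcases lt_or_eq_of_le (hu_mem n).2.1 with h | h
    · exact h
    · exfalso
      have htop : klBin x (u n) = ⊤ := by
        rw [klBin, if_pos ⟨Or.inr h, by rw [h]; exact ne_of_lt hx1'⟩]
      have h2 := (hu_mem n).2.2
      rw [htop] at h2
      exact (lt_irrefl _ (lt_of_le_of_lt h2 ENNReal.ofReal_lt_top))
  have hklu : ∀ n, klBin x (u n) = ENNReal.ofReal (f (u n)) := by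
    intro n
    rw [klBin, if_neg]
    rintro ⟨h1 | h1, h2⟩
    · apply h2
      have hle := (hu_mem n).1
      rw [h1] at hle ⊢
      linarith
    · exact absurd h1 (ne_of_lt (hun1 n))
  have hfu : ∀ n, f (u n) ≤ b := by
    intro n
    have h := (hu_mem n).2.2
    rw [hklu n] at h
    exact (ENNReal.ofReal_le_ofReal_iff hb).mp h
  have hs1' : s < 1 := by
    by_contra hcon
    have hseq : s = 1 := le_antisymm hs1 (not_lt.mp hcon)
    have h1 : Filter.Tendsto (fun n => 1 - u n) Filter.atTop (nhdsWithin 0 (Set.Ioi 0)) := by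
      apply tendsto_nhdsWithin_of_tendsto_nhds_of_eventually_within
      · have h2 := Filter.Tendsto.const_sub 1 hu_tend
        rw [← hs, hseq] at h2
        simpa using h2
      · exact Filter.Eventually.of_forall fun n => by
          simp only [Set.mem_Ioi]
          linarith [hun1 n]
    have hlog : Filter.Tendsto (fun n => Real.log (1 - u n)) Filter.atTop Filter.atBot :=
      Real.tendsto_log_nhdsGT_zero.comp h1
    have hneg : Filter.Tendsto (fun n => Real.log (1 - x) + -Real.log (1 - u n))
        Filter.atTop Filter.atTop :=
      Filter.tendsto_atTop_add_const_left _ _ (Filter.tendsto_neg_atBot_atTop.comp hlog)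
    have htt : Filter.Tendsto
        (fun n => x * Real.log x + (1 - x) * (Real.log (1 - x) + -Real.log (1 - u n)))
        Filter.atTop Filter.atTop :=
      Filter.tendsto_atTop_add_const_left _ _ (hneg.const_mul_atTop (by linarith))
    have hlb : ∀ n, x * Real.log x + (1 - x) * (Real.log (1 - x) + -Real.log (1 - u n))
        ≤ f (u n) := by
      intro n
      have h1x : (1 : ℝ) - x ≠ 0 := by linarith
      have h1u : (1 : ℝ) - u n ≠ 0 := by have := hun1 n; intro hc; linarith [hc]
      have heq2 : Real.log ((1 - x) / (1 - u n)) = Real.log (1 - x) + -Real.log (1 - u n) := by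
        rw [Real.log_div h1x h1u]; ring
      have hterm1 : x * Real.log x ≤ x * Real.log (x / u n) := by
        rcases eq_or_ne x 0 with h | h
        · simp [h]
        · have hxpos : 0 < x := lt_of_le_of_ne hx0 (Ne.symm h)
          have hupos : 0 < u n := lt_of_lt_of_le hxpos (hu_mem n).1
          have hxle : x ≤ x / u n := by
            rw [le_div_iff₀ hupos]
            nlinarith [(hu_mem n).2.1]
          exact mul_le_mul_of_nonneg_left (Real.log_le_log hxpos hxle) hx0
      simp only [hfdef]
      rw [heq2] at *
      linarith [hterm1]
    obtain ⟨n, hn⟩ := (htt.eventually_gt_atTop b).exists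
    linarith [hfu n, hlb n]
  -- now 0 < s < 1: continuity
  have hsne0 : s ≠ 0 := ne_of_gt hs0
  have hc1 : ContinuousAt (fun y => x * Real.log (x / y)) s := by
    rcases eq_or_ne x 0 with h | h
    · simp only [h, zero_mul]
      exact continuousAt_const
    · have hinner : ContinuousAt (fun y : ℝ => x / y) s :=
        ContinuousAt.div continuousAt_const continuousAt_id hsne0
      have hlogc : ContinuousAt (fun y : ℝ => Real.log (x / y)) s :=
        by refine ContinuousAt.comp (Real.continuousAt_log ?_) hinner
           exact div_ne_zero h hsne0
      exact continuousAt_const.mul hlogc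
  have hc2 : ContinuousAt (fun y => (1 - x) * Real.log ((1 - x) / (1 - y))) s := by
    have h1x : (1 : ℝ) - x ≠ 0 := by linarith
    have h1s : (1 : ℝ) - s ≠ 0 := by linarith
    have hinner : ContinuousAt (fun y : ℝ => (1 - x) / (1 - y)) s :=
      ContinuousAt.div continuousAt_const (continuousAt_const.sub continuousAt_id) h1s
    have hlogc : ContinuousAt (fun y : ℝ => Real.log ((1 - x) / (1 - y))) s :=
      by refine ContinuousAt.comp (Real.continuousAt_log ?_) hinner
         exact div_ne_zero h1x h1s
    exact continuousAt_const.mul hlogc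
  have hcf : ContinuousAt f s := hc1.add hc2
  have hfs : f s ≤ b :=
    le_of_tendsto (hcf.tendsto.comp hu_tend) (Filter.Eventually.of_forall hfu)
  have hcond : ¬((s = 0 ∨ s = 1) ∧ x ≠ s) := by
    rintro ⟨h | h, _⟩
    exacts [hsne0 h, (ne_of_lt hs1') h]
  rw [klBin, if_neg hcond]
  exact ENNReal.ofReal_le_ofReal hfs
end

section
/- The map kl⁻¹ is monotone in both arguments: for all 0 ≤ x ≤ x' ≤ 1 and 0 ≤ b ≤ b', one has kl⁻¹(x,b) ≤ kl⁻¹(x',b'). -/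
open MeasureTheory ENNReal

/-!
Enlarging `b` enlarges the set whose supremum is `kl⁻¹(x, b)`. For `x ≤ x'`, every admissible
`y ≤ x'` lies below `kl⁻¹(x', b) ≥ x'`, and an admissible `y > x'` stays admissible for `x'`
because `q ↦ kl(q, y)` decreases on `[0, y]`. The latter follows from writing
`kl(q, p) = p φ(q/p) + (1 - p) φ((1 - q)/(1 - p))` with `φ t = t log t + 1 - t` (`klFun`),
which decreases on `[0, 1]` and increases on `[1, ∞)`.
-/

open Real Set InformationTheory

lemma InformationTheory.antitoneOn_klFun : AntitoneOn klFun (Icc 0 1) := by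
  refine antitoneOn_of_deriv_nonpos (convex_Icc 0 1) continuous_klFun.continuousOn
    (fun x hx ↦ ?_) fun x hx ↦ ?_ <;> rw [interior_Icc] at hx
  · exact (hasDerivAt_klFun hx.1.ne').differentiableAt.differentiableWithinAt
  · rw [deriv_klFun]
    exact log_nonpos hx.1.le hx.2.le

lemma InformationTheory.monotoneOn_klFun : MonotoneOn klFun (Ici 1) := by
  refine monotoneOn_of_deriv_nonneg (convex_Ici 1) continuous_klFun.continuousOn
    (fun x hx ↦ ?_) fun x hx ↦ ?_ <;> rw [interior_Ici] at hx
  · exact (hasDerivAt_klFun (zero_lt_one.trans hx).ne').differentiableAt.differentiableWithinAt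
  · rw [deriv_klFun]
    exact log_nonneg hx.le

lemma klBin_self (x : ℝ) : klBin x x = 0 := by
  rw [klBin, if_neg (by simp)]
  rcases eq_or_ne x 0 with rfl | hx0
  · simp
  rcases eq_or_ne x 1 with rfl | hx1
  · simp
  rw [div_self hx0, div_self (sub_ne_zero.mpr hx1.symm)]
  simp

lemma klBin_one_of_ne {q : ℝ} (hq : q ≠ 1) : klBin q 1 = ∞ := by
  rw [klBin, if_pos ⟨Or.inr rfl, hq⟩]

lemma klBin_eq_klFun {q p : ℝ} (hp : p ∈ Ioo 0 1) :
    klBin q p = ENNReal.ofReal (p * klFun (q / p) + (1 - p) * klFun ((1 - q) / (1 - p))) := by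
  obtain ⟨hp0, hp1⟩ := hp
  have hp1' : 1 - p ≠ 0 := by linarith
  rw [klBin, if_neg (by rintro ⟨rfl | rfl, -⟩ <;> simp at hp0 hp1)]
  congr 1
  simp only [klFun_apply]
  field_simp
  ring

lemma klBin_antitoneOn {p : ℝ} (hp : p ∈ Ioo 0 1) : AntitoneOn (klBin · p) (Icc 0 p) := by
  intro q hq q' hq' hqq'
  simp only [klBin_eq_klFun hp]
  obtain ⟨hp0, hp1⟩ := hp
  have hp1' : 0 < 1 - p := by linarith
  refine ENNReal.ofReal_le_ofReal (add_le_add ?_ ?_)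
  · refine mul_le_mul_of_nonneg_left (antitoneOn_klFun ?_ ?_ ?_) hp0.le
    · exact ⟨div_nonneg hq.1 hp0.le, (div_le_one hp0).mpr hq.2⟩
    · exact ⟨div_nonneg hq'.1 hp0.le, (div_le_one hp0).mpr hq'.2⟩
    · gcongr
  · refine mul_le_mul_of_nonneg_left (monotoneOn_klFun ?_ ?_ ?_) hp1'.le
    · exact (one_le_div hp1').mpr (by linarith [hq'.2])
    · exact (one_le_div hp1').mpr (by linarith [hq.2])
    · gcongr

lemma le_klInv {x y : ℝ} {b : ℝ≥0∞} (hy : x ≤ y ∧ y ≤ 1 ∧ klBin x y ≤ b) : y ≤ klInv x b :=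
  le_csSup ⟨1, fun _ h ↦ h.2.1⟩ hy

lemma self_le_klInv {x : ℝ} (hx : x ≤ 1) (b : ℝ≥0∞) : x ≤ klInv x b :=
  le_klInv ⟨le_rfl, hx, by simp [klBin_self]⟩

lemma klInv_mono_right {x : ℝ} (hx : x ≤ 1) : Monotone (klInv x) := fun _ _ hbb' ↦
  csSup_le_csSup ⟨1, fun _ h ↦ h.2.1⟩ ⟨x, le_rfl, hx, by simp [klBin_self]⟩
    fun _ ⟨hxy, hy1, hkl⟩ ↦ ⟨hxy, hy1, hkl.trans hbb'⟩

lemma klBin_le_klBin_of_le_left {x x' y : ℝ} (hx0 : 0 ≤ x) (hxx' : x ≤ x') (hx'y : x' < y)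
    (hy1 : y ≤ 1) : klBin x' y ≤ klBin x y := by
  rcases hy1.lt_or_eq with hy1 | rfl
  · exact klBin_antitoneOn ⟨(hx0.trans hxx').trans_lt hx'y, hy1⟩ ⟨hx0, hxx'.trans hx'y.le⟩
      ⟨hx0.trans hxx', hx'y.le⟩ hxx'
  · rw [klBin_one_of_ne (hxx'.trans_lt hx'y).ne]
    exact le_top

lemma klInv_mono_left {x x' : ℝ} (hx0 : 0 ≤ x) (hxx' : x ≤ x') (hx'1 : x' ≤ 1) (b : ℝ≥0∞) :
    klInv x b ≤ klInv x' b := by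
  refine csSup_le ⟨x, le_rfl, hxx'.trans hx'1, by simp [klBin_self]⟩ ?_
  rintro y ⟨-, hy1, hkl⟩
  rcases le_or_gt y x' with hyx' | hx'y
  · exact hyx'.trans (self_le_klInv hx'1 b)
  · exact le_klInv ⟨hx'y.le, hy1, (klBin_le_klBin_of_le_left hx0 hxx' hx'y hy1).trans hkl⟩

theorem klInv_monotone_general (x x' b b' : ℝ)
    (hx0 : 0 ≤ x) (hxx' : x ≤ x') (hx'1 : x' ≤ 1)
    (hbb' : b ≤ b') :
    klInv x (ENNReal.ofReal b) ≤ klInv x' (ENNReal.ofReal b') :=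
  (klInv_mono_left hx0 hxx' hx'1 _).trans (klInv_mono_right hx'1 (ENNReal.ofReal_le_ofReal hbb'))

/-- Monotonicity of the inverse binary KL in both arguments. -/
theorem klInv_monotone (x x' b b' : ℝ)
    (hx0 : 0 ≤ x) (hxx' : x ≤ x') (hx'1 : x' ≤ 1)
    (hb0 : 0 ≤ b) (hbb' : b ≤ b') :
    klInv x (ENNReal.ofReal b) ≤ klInv x' (ENNReal.ofReal b') :=
  klInv_monotone_general x x' b b' hx0 hxx' hx'1 hbb'
end

section
/- For all real numbers 0 ≤ q ≤ p < 1, kl(q,p) ≥ (p−q)² / (2p) (refined Pinsker inequality for Bernoulli distributions). -/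
/-!
Split `kl(q,p)` into its two terms and bound each by an elementary logarithm inequality:
`log x ≥ (x - x⁻¹)/2 = sinh (log x)` on `(0,1]` gives `q log(q/p) ≥ (q² - p²)/(2p)`, and
`log x ≥ 1 - x⁻¹` gives `(1-q) log((1-q)/(1-p)) ≥ p - q`. The two bounds add up to `(p-q)²/(2p)`.
-/

open MeasureTheory ENNReal

namespace Real

lemma sub_inv_div_two_le_log {x : ℝ} (hx₀ : 0 < x) (hx₁ : x ≤ 1) : (x - x⁻¹) / 2 ≤ log x := by
  rw [← sinh_log hx₀]
  exact sinh_le_self_iff.mpr (log_nonpos hx₀.le hx₁)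

lemma sq_sub_sq_div_le_mul_log_div {a b : ℝ} (ha : 0 ≤ a) (hab : a ≤ b) (hb : 0 < b) :
    (a ^ 2 - b ^ 2) / (2 * b) ≤ a * log (a / b) := by
  rcases ha.eq_or_lt with rfl | ha
  · simp only [ne_eq, OfNat.ofNat_ne_zero, not_false_eq_true, zero_pow, zero_sub, zero_mul]
    exact div_nonpos_of_nonpos_of_nonneg (neg_nonpos.mpr (sq_nonneg b)) (by positivity)
  calc (a ^ 2 - b ^ 2) / (2 * b) = a * ((a / b - (a / b)⁻¹) / 2) := by field_simp
    _ ≤ a * log (a / b) :=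
      mul_le_mul_of_nonneg_left
        (sub_inv_div_two_le_log (div_pos ha hb) ((div_le_one hb).mpr hab)) ha.le

lemma sub_le_mul_log_div {a b : ℝ} (ha : 0 < a) (hb : 0 < b) : a - b ≤ a * log (a / b) :=
  calc a - b = a * (1 - (a / b)⁻¹) := by field_simp
    _ ≤ a * log (a / b) :=
      mul_le_mul_of_nonneg_left (one_sub_inv_le_log_of_pos (div_pos ha hb)) ha.le

end Real

lemma klBin_of_mem_Ioo {q p : ℝ} (hp₀ : 0 < p) (hp₁ : p < 1) :
    klBin q p = ENNReal.ofReal (q * Real.log (q / p) + (1 - q) * Real.log ((1 - q) / (1 - p))) :=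
  if_neg fun ⟨h, _⟩ ↦ h.elim hp₀.ne' hp₁.ne

/-- **Refined Pinsker inequality** for Bernoulli distributions:
for `0 ≤ q ≤ p < 1`, `kl(q,p) ≥ (p−q)²/(2p)`. -/
theorem refined_pinsker (q p : ℝ) (hq : 0 ≤ q) (hqp : q ≤ p) (hp : p < 1) :
    ENNReal.ofReal ((p - q) ^ 2 / (2 * p)) ≤ klBin q p := by
  rcases (hq.trans hqp).eq_or_lt with rfl | hp₀
  · simp
  rw [klBin_of_mem_Ioo hp₀ hp]
  apply ENNReal.ofReal_le_ofReal
  calc (p - q) ^ 2 / (2 * p) = (q ^ 2 - p ^ 2) / (2 * p) + ((1 - q) - (1 - p)) := by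
        field_simp; ring
    _ ≤ q * Real.log (q / p) + (1 - q) * Real.log ((1 - q) / (1 - p)) :=
      add_le_add (Real.sq_sub_sq_div_le_mul_log_div hq hqp hp₀)
        (Real.sub_le_mul_log_div (by linarith) (by linarith))
end

section
/- Fix a probability measure D on Z, an integer m ≥ 1, a prior probability measure P on H, λ > 0, and δ ∈ (0,1). With probability at least 1−δ over the draw of an i.i.d. sample S ~ D^⊗m, simultaneously for every probability measure Q on H, R_D(Q) ≤ R̂_S(Q) + (KL(Q‖P) + ln(1/δ)) / λ + λ / (8m) (Catoni-type PAC-Bayes bound for bounded losses). -/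
open MeasureTheory ENNReal

open Classical in
/-- Kullback–Leibler divergence between measures, `+∞` if `Q` is not absolutely
continuous with respect to `P` (or if the log-likelihood ratio is not integrable,
in which case the divergence between probability measures is indeed infinite). -/
noncomputable def klDiv' {α : Type*} [MeasurableSpace α] (Q P : Measure α) : ℝ≥0∞ :=
  if Q ≪ P ∧ Integrable (fun x => Real.log (Q.rnDeriv P x).toReal) Q
  then ENNReal.ofReal (∫ x, Real.log (Q.rnDeriv P x).toReal ∂Q)
  else ∞

/-- Population risk of a hypothesis `h`. -/
noncomputable def riskD {H Z : Type*} [MeasurableSpace Z] (ℓ : H → Z → ℝ)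
    (D : Measure Z) (h : H) : ℝ := ∫ z, ℓ h z ∂D

/-- Empirical risk of a hypothesis `h` on the sample `S`. -/
noncomputable def riskS {H Z : Type*} (ℓ : H → Z → ℝ) {m : ℕ} (S : Fin m → Z) (h : H) : ℝ :=
  (1 / (m : ℝ)) * ∑ j, ℓ h (S j)

/-- Population risk of a distribution `Q` over hypotheses. -/
noncomputable def riskDQ {H Z : Type*} [MeasurableSpace H] [MeasurableSpace Z]
    (ℓ : H → Z → ℝ) (D : Measure Z) (Q : Measure H) : ℝ := ∫ h, riskD ℓ D h ∂Q

/-- Empirical risk of a distribution `Q` over hypotheses on the sample `S`. -/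
noncomputable def riskSQ {H Z : Type*} [MeasurableSpace H] (ℓ : H → Z → ℝ) {m : ℕ}
    (S : Fin m → Z) (Q : Measure H) : ℝ := ∫ h, riskS ℓ S h ∂Q

/-! For a fixed hypothesis `h`, Hoeffding's lemma and the independence of the sample give
`E_S[exp (λ (R_D(h) - R̂_S(h)))] ≤ exp (λ² / 8m)`. By Fubini the same bound holds for the average
`Ψ(S)` (`priorExpMoment`) of `exp (λ (R_D(h) - R̂_S(h)))` over the prior, so by Markov's inequality
`Ψ(S) < exp (λ² / 8m) / δ` with probability at least `1 - δ`. On that event the Donsker–Varadhan inequality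
`E_Q[f] ≤ KL(Q‖P) + log E_P[exp f]`, applied to `f = λ (R_D - R̂_S)`, gives the bound for every
posterior `Q` at once. -/

open Real Set ProbabilityTheory InformationTheory

lemma ProbabilityTheory.HasSubgaussianMGF.sum_pi {Ω ι : Type*} [MeasurableSpace Ω] [Fintype ι]
    {μ : Measure Ω} [IsProbabilityMeasure μ] {X : Ω → ℝ} {c : NNReal}
    (hX : HasSubgaussianMGF X c μ) :
    HasSubgaussianMGF (fun ω : ι → Ω ↦ ∑ i, X (ω i)) (Fintype.card ι * c)
      (Measure.pi fun _ ↦ μ) := by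
  have hsum := sum_of_iIndepFun (s := Finset.univ) (c := fun _ ↦ c)
    (iIndepFun_pi (X := fun _ : ι ↦ X) (μ := fun _ ↦ μ) fun _ ↦ hX.aemeasurable)
    fun i _ ↦ .of_map (measurable_pi_apply i).aemeasurable
      (by rwa [(measurePreserving_eval (μ := fun _ : ι ↦ μ) i).map_eq])
  simpa [Finset.sum_const, nsmul_eq_mul] using hsum

lemma integral_exp_mul_sum_integral_sub_le {Z : Type*} [MeasurableSpace Z] {D : Measure Z}
    [IsProbabilityMeasure D] {X : Z → ℝ} (hX : Measurable X) (hX01 : ∀ z, X z ∈ Icc 0 1)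
    (m : ℕ) (t : ℝ) :
    ∫ S, exp (t * ∑ j : Fin m, (D[X] - X (S j))) ∂(Measure.pi fun _ ↦ D) ≤
      exp (m * t ^ 2 / 8) := by
  have hmgf := ((hasSubgaussianMGF_of_mem_Icc (μ := D) hX.aemeasurable
    (ae_of_all _ hX01)).neg.sum_pi (ι := Fin m)).mgf_le t
  simp only [mgf, Pi.neg_apply, neg_sub] at hmgf
  convert hmgf using 2
  norm_num
  ring

/-- The easy half of the Donsker–Varadhan variational formula. -/
lemma ofReal_integral_sub_log_integral_exp_le_klDiv {α : Type*} [MeasurableSpace α]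
    {Q P : Measure α} [IsProbabilityMeasure Q] [IsProbabilityMeasure P] {f : α → ℝ}
    (hfQ : Integrable f Q) (hfP : Integrable (fun x ↦ exp (f x)) P) :
    ENNReal.ofReal (∫ x, f x ∂Q - log (∫ x, exp (f x) ∂P)) ≤ klDiv Q P := by
  by_cases hQP : Q ≪ P ∧ Integrable (llr Q P) Q
  swap
  · simp [klDiv_eq_top_iff.2 fun h ↦ not_and.1 hQP h]
  obtain ⟨hac, hint⟩ := hQP
  have : IsProbabilityMeasure (P.tilted f) := isProbabilityMeasure_tilted hfP
  -- Gibbs' inequality for `Q` against the Gibbs measure `P.tilted f`.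
  have gibbs := integral_llr_add_sub_measure_univ_nonneg
    (hac.trans (absolutelyContinuous_tilted hfP)) (integrable_llr_tilted_right hac hfQ hint hfP)
  rw [integral_llr_tilted_right hac hfQ hfP hint] at gibbs
  rw [klDiv_of_ac_of_integrable hac hint]
  apply ENNReal.ofReal_le_ofReal
  simp only [probReal_univ] at gibbs ⊢
  linarith

lemma klDiv'_eq_klDiv {α : Type*} [MeasurableSpace α] (Q P : Measure α)
    [IsProbabilityMeasure Q] [IsProbabilityMeasure P] : klDiv' Q P = klDiv Q P := by
  rw [klDiv_def, klDiv']
  simp [llr_def]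
  congr

lemma ofReal_one_sub_le_measure_lt_div {Ω : Type*} [MeasurableSpace Ω] {μ : Measure Ω}
    [IsProbabilityMeasure μ] {g : Ω → ℝ} (hg0 : 0 ≤ᵐ[μ] g) (hg : Integrable g μ) {B δ : ℝ}
    (hB : 0 < B) (hgB : ∫ ω, g ω ∂μ ≤ B) (hδ : 0 < δ) :
    ENNReal.ofReal (1 - δ) ≤ μ {ω | g ω < B / δ} := by
  have hmarkov : μ.real {ω | B / δ ≤ g ω} ≤ δ := by
    have := (mul_meas_ge_le_integral_of_nonneg hg0 hg (B / δ)).trans hgB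
    rwa [div_mul_eq_mul_div, div_le_iff₀ hδ, mul_le_mul_iff_right₀ hB] at this
  rw [measureReal_def, ← ENNReal.le_ofReal_iff_toReal_le (measure_ne_top _ _) hδ.le] at hmarkov
  have hcover : 1 ≤ μ {ω | g ω < B / δ} + μ {ω | B / δ ≤ g ω} := by
    rw [← measure_univ (μ := μ)]
    refine (measure_mono fun ω _ ↦ ?_).trans (measure_union_le _ _)
    exact (lt_or_ge (g ω) (B / δ)).imp id id
  rw [ENNReal.ofReal_sub _ hδ.le, ENNReal.ofReal_one, tsub_le_iff_right]
  exact hcover.trans (add_le_add_right hmarkov _)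

lemma ofReal_le_add_div_add_of_ofReal_le {x y c L lam : ℝ} {K : ENNReal} (hy : 0 ≤ y)
    (hc : 0 ≤ c) (hL : 0 ≤ L) (hlam : 0 < lam)
    (h : ENNReal.ofReal (lam * (x - y - c) - L) ≤ K) :
    ENNReal.ofReal x ≤ ENNReal.ofReal y + (K + ENNReal.ofReal L) / ENNReal.ofReal lam +
      ENNReal.ofReal c := by
  rcases eq_or_ne K ⊤ with rfl | hK
  · simp [ENNReal.top_div_of_ne_top ENNReal.ofReal_ne_top]
  lift K to NNReal using hK
  have hk : lam * (x - y - c) - L ≤ K := by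
    simpa using (ENNReal.ofReal_le_iff_le_toReal ENNReal.coe_ne_top).1 h
  have hbound : x ≤ y + (K + L) / lam + c := by
    rw [← sub_le_iff_le_add, ← sub_le_iff_le_add', le_div_iff₀' hlam]
    linarith
  calc ENNReal.ofReal x ≤ ENNReal.ofReal (y + (K + L) / lam + c) := ENNReal.ofReal_le_ofReal hbound
    _ = _ := by
      rw [ENNReal.ofReal_add (by positivity) hc, ENNReal.ofReal_add hy (by positivity),
        ENNReal.ofReal_div_of_pos hlam, ENNReal.ofReal_add K.coe_nonneg hL,
        ENNReal.ofReal_coe_nnreal]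

section Risks

variable {H Z : Type*} {ℓ : H → Z → ℝ} {m : ℕ}

lemma riskS_mem_Icc (hℓ : ∀ h z, ℓ h z ∈ Icc (0 : ℝ) 1) (S : Fin m → Z) (h : H) :
    riskS ℓ S h ∈ Icc 0 1 := by
  have hsum : ∑ j, ℓ h (S j) ≤ m := by
    simpa using Finset.sum_le_sum fun j (_ : j ∈ Finset.univ) ↦ (hℓ h (S j)).2
  refine ⟨mul_nonneg (by positivity) (Finset.sum_nonneg fun j _ ↦ (hℓ h (S j)).1), ?_⟩
  rcases Nat.eq_zero_or_pos m with rfl | hm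
  · simp [riskS]
  · rwa [riskS, one_div, inv_mul_le_iff₀ (by positivity), mul_one]

variable [MeasurableSpace Z] {D : Measure Z}

lemma riskD_mem_Icc [IsProbabilityMeasure D] (hℓ : ∀ h z, ℓ h z ∈ Icc (0 : ℝ) 1) (h : H) :
    riskD ℓ D h ∈ Icc 0 1 := by
  refine ⟨integral_nonneg fun z ↦ (hℓ h z).1, (le_abs_self _).trans ?_⟩
  simpa [riskD] using norm_integral_le_of_norm_le_const (μ := D) (f := ℓ h) (C := 1)
    (ae_of_all _ fun z ↦ (Real.norm_eq_abs _).trans_le <|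
      abs_le.2 ⟨by linarith [(hℓ h z).1], (hℓ h z).2⟩)

lemma norm_exp_mul_riskD_sub_riskS_le [IsProbabilityMeasure D]
    (hℓ : ∀ h z, ℓ h z ∈ Icc (0 : ℝ) 1) (lam : ℝ) (S : Fin m → Z) (h : H) :
    ‖exp (lam * (riskD ℓ D h - riskS ℓ S h))‖ ≤ exp |lam| := by
  obtain ⟨hD0, hD1⟩ := riskD_mem_Icc (D := D) hℓ h
  obtain ⟨hS0, hS1⟩ := riskS_mem_Icc hℓ S h
  rw [Real.norm_eq_abs, abs_of_pos (exp_pos _), exp_le_exp]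
  refine (le_abs_self _).trans ?_
  rw [abs_mul]
  exact mul_le_of_le_one_right (abs_nonneg _) (abs_sub_le_iff.2 ⟨by linarith, by linarith⟩)

lemma integral_exp_mul_riskD_sub_riskS_le [IsProbabilityMeasure D] {h : H}
    (hℓh : Measurable (ℓ h)) (hℓ : ∀ h z, ℓ h z ∈ Icc (0 : ℝ) 1) (hm : m ≠ 0) (lam : ℝ) :
    ∫ S, exp (lam * (riskD ℓ D h - riskS ℓ S h)) ∂(Measure.pi fun _ : Fin m ↦ D) ≤
      exp (lam ^ 2 / (8 * m)) := by
  have hm' : (m : ℝ) ≠ 0 := Nat.cast_ne_zero.2 hm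
  calc ∫ S, exp (lam * (riskD ℓ D h - riskS ℓ S h)) ∂(Measure.pi fun _ : Fin m ↦ D)
      = ∫ S, exp (lam / m * ∑ j, (D[ℓ h] - ℓ h (S j))) ∂(Measure.pi fun _ : Fin m ↦ D) := by
        congr with S
        rw [Finset.sum_sub_distrib, Finset.sum_const, Finset.card_univ, Fintype.card_fin,
          nsmul_eq_mul, riskS, riskD]
        field_simp
    _ ≤ exp (m * (lam / m) ^ 2 / 8) := integral_exp_mul_sum_integral_sub_le hℓh (hℓ h) m _
    _ = exp (lam ^ 2 / (8 * m)) := by field_simp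

variable [MeasurableSpace H]

lemma measurable_riskD [SFinite D] (hℓ : Measurable fun p : H × Z ↦ ℓ p.1 p.2) :
    Measurable (riskD ℓ D) :=
  hℓ.stronglyMeasurable.integral_prod_right'.measurable

lemma measurable_riskS_uncurry (hℓ : Measurable fun p : H × Z ↦ ℓ p.1 p.2) :
    Measurable fun p : H × (Fin m → Z) ↦ riskS ℓ p.2 p.1 :=
  (Finset.measurable_sum _ fun j _ ↦
    hℓ.comp (measurable_fst.prodMk ((measurable_pi_apply j).comp measurable_snd))).const_mul _

lemma measurable_riskS (hℓ : Measurable fun p : H × Z ↦ ℓ p.1 p.2) (S : Fin m → Z) :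
    Measurable (riskS ℓ S) :=
  (measurable_riskS_uncurry hℓ).comp (measurable_id.prodMk measurable_const)

noncomputable def priorExpMoment (ℓ : H → Z → ℝ) (D : Measure Z) (P : Measure H) (lam : ℝ)
    (S : Fin m → Z) : ℝ :=
  ∫ h, exp (lam * (riskD ℓ D h - riskS ℓ S h)) ∂P

variable {P : Measure H}

lemma integrable_exp_mul_riskD_sub_riskS [IsProbabilityMeasure D] {μ : Measure H}
    [IsFiniteMeasure μ] (hℓmeas : Measurable fun p : H × Z ↦ ℓ p.1 p.2)
    (hℓ : ∀ h z, ℓ h z ∈ Icc (0 : ℝ) 1) (lam : ℝ) (S : Fin m → Z) :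
    Integrable (fun h ↦ exp (lam * (riskD ℓ D h - riskS ℓ S h))) μ :=
  .of_bound (((measurable_riskD hℓmeas).sub (measurable_riskS hℓmeas S)).const_mul
    lam).exp.aestronglyMeasurable (exp |lam|)
    (ae_of_all _ (norm_exp_mul_riskD_sub_riskS_le hℓ lam S))

lemma integrable_exp_mul_riskD_sub_riskS_prod [IsProbabilityMeasure D] [IsProbabilityMeasure P]
    (hℓmeas : Measurable fun p : H × Z ↦ ℓ p.1 p.2) (hℓ : ∀ h z, ℓ h z ∈ Icc (0 : ℝ) 1)
    (lam : ℝ) :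
    Integrable (fun p : H × (Fin m → Z) ↦ exp (lam * (riskD ℓ D p.1 - riskS ℓ p.2 p.1)))
      (P.prod (Measure.pi fun _ ↦ D)) :=
  .of_bound (((((measurable_riskD hℓmeas).comp measurable_fst).sub
    (measurable_riskS_uncurry hℓmeas)).const_mul lam).exp.aestronglyMeasurable) (exp |lam|)
    (ae_of_all _ fun p ↦ norm_exp_mul_riskD_sub_riskS_le hℓ lam p.2 p.1)

lemma priorExpMoment_pos [IsProbabilityMeasure D] [IsProbabilityMeasure P]
    (hℓmeas : Measurable fun p : H × Z ↦ ℓ p.1 p.2) (hℓ : ∀ h z, ℓ h z ∈ Icc (0 : ℝ) 1)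
    (lam : ℝ) (S : Fin m → Z) : 0 < priorExpMoment ℓ D P lam S :=
  integral_exp_pos (integrable_exp_mul_riskD_sub_riskS hℓmeas hℓ lam S)

lemma integrable_priorExpMoment [IsProbabilityMeasure D] [IsProbabilityMeasure P]
    (hℓmeas : Measurable fun p : H × Z ↦ ℓ p.1 p.2) (hℓ : ∀ h z, ℓ h z ∈ Icc (0 : ℝ) 1)
    (lam : ℝ) : Integrable (priorExpMoment ℓ D P lam) (Measure.pi fun _ : Fin m ↦ D) :=
  (integrable_exp_mul_riskD_sub_riskS_prod hℓmeas hℓ lam).integral_prod_right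

lemma integral_priorExpMoment_le [IsProbabilityMeasure D] [IsProbabilityMeasure P]
    (hℓmeas : Measurable fun p : H × Z ↦ ℓ p.1 p.2) (hℓ : ∀ h z, ℓ h z ∈ Icc (0 : ℝ) 1)
    (hm : m ≠ 0) (lam : ℝ) :
    ∫ S, priorExpMoment ℓ D P lam S ∂(Measure.pi fun _ : Fin m ↦ D) ≤
      exp (lam ^ 2 / (8 * m)) := by
  have hprod := integrable_exp_mul_riskD_sub_riskS_prod (D := D) (P := P) (m := m) hℓmeas hℓ lam
  unfold priorExpMoment
  rw [← integral_integral_swap hprod]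
  calc ∫ h, ∫ S, exp (lam * (riskD ℓ D h - riskS ℓ S h)) ∂(Measure.pi fun _ ↦ D) ∂P
      ≤ ∫ _, exp (lam ^ 2 / (8 * m)) ∂P :=
        integral_mono hprod.integral_prod_left (integrable_const _) fun h ↦
          integral_exp_mul_riskD_sub_riskS_le (ℓ := ℓ) (h := h)
            (hℓmeas.comp measurable_prodMk_left) hℓ hm lam
    _ = exp (lam ^ 2 / (8 * m)) := by simp

lemma ofReal_mul_riskDQ_sub_riskSQ_sub_log_le_klDiv' [IsProbabilityMeasure D]
    [IsProbabilityMeasure P] (hℓmeas : Measurable fun p : H × Z ↦ ℓ p.1 p.2)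
    (hℓ : ∀ h z, ℓ h z ∈ Icc (0 : ℝ) 1) (lam : ℝ) (S : Fin m → Z) (Q : Measure H)
    [IsProbabilityMeasure Q] :
    ENNReal.ofReal (lam * (riskDQ ℓ D Q - riskSQ ℓ S Q) -
      log (priorExpMoment ℓ D P lam S)) ≤ klDiv' Q P := by
  have hDQ : Integrable (riskD ℓ D) Q := .of_mem_Icc 0 1
    (measurable_riskD hℓmeas).aemeasurable (ae_of_all _ (riskD_mem_Icc hℓ))
  have hSQ : Integrable (riskS ℓ S) Q := .of_mem_Icc 0 1
    (measurable_riskS hℓmeas S).aemeasurable (ae_of_all _ (riskS_mem_Icc hℓ S))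
  have hmean : ∫ h, lam * (riskD ℓ D h - riskS ℓ S h) ∂Q =
      lam * (riskDQ ℓ D Q - riskSQ ℓ S Q) := by
    rw [integral_const_mul, integral_sub hDQ hSQ, riskDQ, riskSQ]
  rw [klDiv'_eq_klDiv, ← hmean]
  exact ofReal_integral_sub_log_integral_exp_le_klDiv ((hDQ.sub hSQ).const_mul lam)
    (integrable_exp_mul_riskD_sub_riskS hℓmeas hℓ lam S)

end Risks

/-- **Catoni-type PAC-Bayes bound** for bounded losses: with probability at least `1 − δ`
over `S ~ D^⊗m`, simultaneously for every posterior `Q`,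
`R_D(Q) ≤ R̂_S(Q) + (KL(Q‖P) + ln(1/δ))/λ + λ/(8m)`. -/
theorem catoni_pac_bayes_bound
    {H Z : Type*} [MeasurableSpace H] [MeasurableSpace Z]
    (ℓ : H → Z → ℝ) (hℓmeas : Measurable fun p : H × Z => ℓ p.1 p.2)
    (hℓbdd : ∀ h z, ℓ h z ∈ Set.Icc (0 : ℝ) 1)
    (D : Measure Z) [IsProbabilityMeasure D]
    (m : ℕ) (hm : 1 ≤ m)
    (P : Measure H) [IsProbabilityMeasure P]
    (lam : ℝ) (hlam : 0 < lam)
    (δ : ℝ) (hδ : δ ∈ Set.Ioo (0 : ℝ) 1) :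
    ENNReal.ofReal (1 - δ) ≤
      (Measure.pi fun _ : Fin m => D)
        {S | ∀ Q : Measure H, IsProbabilityMeasure Q →
          ENNReal.ofReal (riskDQ ℓ D Q) ≤
            ENNReal.ofReal (riskSQ ℓ S Q) +
              (klDiv' Q P + ENNReal.ofReal (Real.log (1 / δ))) / ENNReal.ofReal lam +
              ENNReal.ofReal (lam / (8 * m))} := by
  have hmarkov := ofReal_one_sub_le_measure_lt_div (g := priorExpMoment ℓ D P lam)
    (ae_of_all _ fun S ↦ (priorExpMoment_pos hℓmeas hℓbdd lam S).le)
    (integrable_priorExpMoment hℓmeas hℓbdd lam) (exp_pos _)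
    (integral_priorExpMoment_le hℓmeas hℓbdd (Nat.one_le_iff_ne_zero.mp hm) lam) hδ.1
  refine hmarkov.trans (measure_mono fun S hS Q hQ ↦ ?_)
  have hlog : Real.log (priorExpMoment ℓ D P lam S) ≤ lam ^ 2 / (8 * m) + Real.log (1 / δ) := by
    rw [← Real.log_exp (lam ^ 2 / (8 * m)), ← Real.log_mul (exp_pos _).ne'
      (one_div_pos.2 hδ.1).ne', ← div_eq_mul_one_div]
    exact Real.log_le_log (priorExpMoment_pos hℓmeas hℓbdd lam S) hS.le
  refine ofReal_le_add_div_add_of_ofReal_le (integral_nonneg fun h ↦ (riskS_mem_Icc hℓbdd S h).1)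
    (by positivity) (Real.log_nonneg ((one_le_div hδ.1).2 hδ.2.le)) hlam
    ((ENNReal.ofReal_le_ofReal ?_).trans
      (ofReal_mul_riskDQ_sub_riskSQ_sub_log_le_klDiv' (D := D) (P := P) hℓmeas hℓbdd lam S Q))
  rw [mul_sub, mul_div_assoc', ← sq]
  linarith
end
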